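/- arXiv:1703.00637 — 5 statements merged into one kernel-verified Lean document; each statement's English description precedes it below -/
import Mathlib

section
/- Let P be a real-valued C^k function on [a,b] with |P^{(k)}(x)| ≥ M > 0 for all x in [a,b], where k ≥ 2, and let ψ be a complex-valued C^1 function on [a,b]. Then there is a constant c_k depending only on k such that |∫_a^b e^{iP(x)} ψ(x) dx| ≤ c_k M^{-1/k} (|ψ(b)| + ∫_a^b |ψ'(x)| dx). -/
/-!
Integrating by parts against the primitive of `e^{iP}` reduces the claim to the case `ψ = 1`,
uniformly over the intervals `[a, x]`. That case is proved by induction on `k`, for chains of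
successive derivatives. If `|P^{(k+1)}| ≥ M` then `P^{(k)}` is strictly monotone and
`|P^{(k)}(x)| ≥ M |x - t₀|` for some `t₀`; off the `δ`-neighbourhood of `t₀` the `k`-th case applies
with `Mδ` in place of `M`, on at most two intervals, while the neighbourhood contributes at most
`2δ`. The choice `δ = M^{-1/(k+1)}` balances the two. For `k = 2` the inner case is the first
derivative test, where `P'` is monotone: writing `e^{iP} = (e^{iP})' / (iP')` and integrating by
parts leaves `∫ |(1/P')'| = |1/P'(b) - 1/P'(a)|`.
-/

open Set MeasureTheory intervalIntegral

theorem ContDiffOn.hasDerivWithinAt_iteratedDerivWithin {𝕜 F : Type*}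
    [NontriviallyNormedField 𝕜] [NormedAddCommGroup F] [NormedSpace 𝕜 F] {f : 𝕜 → F} {s : Set 𝕜}
    {n j : ℕ} {x : 𝕜} (hf : ContDiffOn 𝕜 n f s) (hs : UniqueDiffOn 𝕜 s) (hj : j < n)
    (hx : x ∈ s) :
    HasDerivWithinAt (iteratedDerivWithin j f s) (iteratedDerivWithin (j + 1) f s x) s x := by
  rw [iteratedDerivWithin_succ]
  exact ((hf.differentiableOn_iteratedDerivWithin (mod_cast hj) hs) x hx).hasDerivWithinAt

namespace VanDerCorput

theorem forall_le_or_forall_le_neg_of_le_abs {a b M : ℝ} {h : ℝ → ℝ} (hM : 0 < M)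
    (hh : ContinuousOn h (Icc a b)) (hbig : ∀ x ∈ Icc a b, M ≤ |h x|) :
    (∀ x ∈ Icc a b, M ≤ h x) ∨ (∀ x ∈ Icc a b, h x ≤ -M) := by
  have hne : h '' Icc a b ⊆ Ioi 0 ∪ Iio 0 := by
    rintro _ ⟨x, hx, rfl⟩
    exact (abs_pos.1 (hM.trans_le (hbig x hx))).lt_or_gt.symm
  rcases (isPreconnected_Icc.image h hh).subset_or_subset isOpen_Ioi isOpen_Iio
      (disjoint_left.2 fun y hy hy' => lt_asymm hy hy') hne with hpos | hneg
  · exact Or.inl fun x hx => (hbig x hx).trans_eq (abs_of_pos (hpos (mem_image_of_mem h hx)))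
  · exact Or.inr fun x hx =>
      le_neg.2 ((hbig x hx).trans_eq (abs_of_neg (hneg (mem_image_of_mem h hx))))

theorem mul_sub_le_sub_of_le_deriv {a b M : ℝ} {g g' : ℝ → ℝ}
    (hg : ∀ x ∈ Icc a b, HasDerivWithinAt g (g' x) (Icc a b) x)
    (hM : ∀ x ∈ Icc a b, M ≤ g' x) :
    ∀ x ∈ Icc a b, ∀ y ∈ Icc a b, x ≤ y → M * (y - x) ≤ g y - g x := by
  have hderiv : ∀ x ∈ Ioo a b, HasDerivAt g (g' x) x := fun x hx =>
    (hg x (Ioo_subset_Icc_self hx)).hasDerivAt (Icc_mem_nhds hx.1 hx.2)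
  refine (convex_Icc a b).mul_sub_le_image_sub_of_le_deriv
    (fun x hx => (hg x hx).continuousWithinAt) ?_ ?_ <;> rw [interior_Icc]
  · exact fun x hx => (hderiv x hx).differentiableAt.differentiableWithinAt
  · exact fun x hx => (hderiv x hx).deriv ▸ hM x (Ioo_subset_Icc_self hx)

theorem exists_mul_abs_sub_le_abs_of_le_deriv {a b M : ℝ} {g g' : ℝ → ℝ} (hab : a ≤ b)
    (hg : ∀ x ∈ Icc a b, HasDerivWithinAt g (g' x) (Icc a b) x)
    (hM : ∀ x ∈ Icc a b, M ≤ g' x) :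
    ∃ t₀ ∈ Icc a b, ∀ x ∈ Icc a b, M * |x - t₀| ≤ |g x| := by
  have hgrow := mul_sub_le_sub_of_le_deriv hg hM
  have hcenter : ∀ t₀ ∈ Icc a b, (a < t₀ → g t₀ ≤ 0) → (t₀ < b → 0 ≤ g t₀) →
      ∀ x ∈ Icc a b, M * |x - t₀| ≤ |g x| := by
    intro t₀ ht₀ hleft hright x hx
    rcases lt_trichotomy x t₀ with hlt | rfl | hgt
    · have := hgrow x hx t₀ ht₀ hlt.le
      have := hleft (hx.1.trans_lt hlt)
      rw [abs_of_neg (sub_neg.2 hlt)]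
      linarith [neg_abs_le (g x)]
    · simp
    · have := hgrow t₀ ht₀ x hx hgt.le
      have := hright (hgt.trans_le hx.2)
      rw [abs_of_pos (sub_pos.2 hgt)]
      linarith [le_abs_self (g x)]
  rcases le_or_gt 0 (g a) with ha | ha
  · exact ⟨a, left_mem_Icc.2 hab, hcenter a (left_mem_Icc.2 hab) (absurd · (lt_irrefl a))
      fun _ => ha⟩
  rcases le_or_gt (g b) 0 with hb | hb
  · exact ⟨b, right_mem_Icc.2 hab, hcenter b (right_mem_Icc.2 hab) (fun _ => hb)
      (absurd · (lt_irrefl b))⟩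
  obtain ⟨t₀, ht₀, hzero⟩ :=
    intermediate_value_Icc hab (fun x hx => (hg x hx).continuousWithinAt) ⟨ha.le, hb.le⟩
  exact ⟨t₀, ht₀, hcenter t₀ ht₀ (fun _ => hzero.le) (fun _ => hzero.ge)⟩

theorem exists_mul_abs_sub_le_abs_of_le_abs_deriv {a b M : ℝ} {g g' : ℝ → ℝ} (hab : a ≤ b)
    (hM : 0 < M) (hg : ∀ x ∈ Icc a b, HasDerivWithinAt g (g' x) (Icc a b) x)
    (hg' : ContinuousOn g' (Icc a b)) (hbig : ∀ x ∈ Icc a b, M ≤ |g' x|) :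
    ∃ t₀ ∈ Icc a b, ∀ x ∈ Icc a b, M * |x - t₀| ≤ |g x| := by
  rcases forall_le_or_forall_le_neg_of_le_abs hM hg' hbig with hpos | hneg
  · exact exists_mul_abs_sub_le_abs_of_le_deriv hab hg hpos
  · obtain ⟨t₀, ht₀, h⟩ := exists_mul_abs_sub_le_abs_of_le_deriv (g' := fun x => -g' x) hab
      (fun x hx => (hg x hx).neg) (fun x hx => le_neg.1 (hneg x hx))
    exact ⟨t₀, ht₀, fun x hx => by simpa using h x hx⟩

theorem integral_eq_sub_of_hasDerivWithinAt_Icc {E : Type*} [NormedAddCommGroup E]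
    [NormedSpace ℝ E] [CompleteSpace E] {f f' : ℝ → E} {a b : ℝ} (hab : a ≤ b)
    (hf : ∀ x ∈ Icc a b, HasDerivWithinAt f (f' x) (Icc a b) x)
    (hf' : IntervalIntegrable f' volume a b) :
    ∫ x in a..b, f' x = f b - f a :=
  integral_eq_sub_of_hasDerivAt_of_le hab (fun x hx => (hf x hx).continuousWithinAt)
    (fun x hx => (hf x (Ioo_subset_Icc_self hx)).hasDerivAt (Icc_mem_nhds hx.1 hx.2)) hf'

theorem integral_abs_eq_abs_sub_of_hasDerivWithinAt {f f' : ℝ → ℝ} {a b : ℝ} (hab : a ≤ b)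
    (hf : ∀ x ∈ Icc a b, HasDerivWithinAt f (f' x) (Icc a b) x)
    (hf' : ContinuousOn f' (Icc a b))
    (hsign : (∀ x ∈ Icc a b, 0 ≤ f' x) ∨ (∀ x ∈ Icc a b, f' x ≤ 0)) :
    ∫ x in a..b, |f' x| = |f b - f a| := by
  rw [← integral_eq_sub_of_hasDerivWithinAt_Icc hab hf (hf'.intervalIntegrable_of_Icc hab)]
  rcases hsign with hpos | hneg
  · rw [abs_of_nonneg (integral_nonneg hab hpos)]
    exact integral_congr fun x hx => abs_of_nonneg (hpos x (uIcc_of_le hab ▸ hx))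
  · rw [← abs_neg, ← intervalIntegral.integral_neg,
      abs_of_nonneg (integral_nonneg hab fun x hx => neg_nonneg.2 (hneg x hx))]
    exact integral_congr fun x hx => abs_of_nonpos (hneg x (uIcc_of_le hab ▸ hx))

theorem hasDerivWithinAt_integral_Icc {E : Type*} [NormedAddCommGroup E] [NormedSpace ℝ E]
    [CompleteSpace E] {f : ℝ → E} {a b x : ℝ} (hf : ContinuousOn f (Icc a b))
    (hx : x ∈ Icc a b) :
    HasDerivWithinAt (fun u => ∫ t in a..u, f t) (f x) (Icc a b) x := by
  have : Fact (x ∈ Icc a b) := ⟨hx⟩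
  exact integral_hasDerivWithinAt_right
    ((hf.mono (uIcc_subset_Icc (left_mem_Icc.2 (hx.1.trans hx.2)) hx)).intervalIntegrable)
    (hf.stronglyMeasurableAtFilter_nhdsWithin measurableSet_Icc x) (hf x hx)

theorem norm_integral_mul_le_of_norm_primitive_le {A : Type*} [NormedRing A] [NormedAlgebra ℝ A]
    [CompleteSpace A] {f ψ ψ' : ℝ → A} {a b K : ℝ} (hab : a ≤ b)
    (hf : ContinuousOn f (Icc a b))
    (hψ : ∀ x ∈ Icc a b, HasDerivWithinAt ψ (ψ' x) (Icc a b) x)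
    (hψ' : ContinuousOn ψ' (Icc a b)) (hK : ∀ x ∈ Icc a b, ‖∫ t in a..x, f t‖ ≤ K) :
    ‖∫ x in a..b, f x * ψ x‖ ≤ K * (‖ψ b‖ + ∫ x in a..b, ‖ψ' x‖) := by
  set F : ℝ → A := fun u => ∫ t in a..u, f t
  have hF : ∀ x ∈ Icc a b, HasDerivWithinAt F (f x) (Icc a b) x := fun x hx =>
    hasDerivWithinAt_integral_Icc hf hx
  have hFc : ContinuousOn F (Icc a b) := fun x hx => (hF x hx).continuousWithinAt
  have hψc : ContinuousOn ψ (Icc a b) := fun x hx => (hψ x hx).continuousWithinAt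
  have hfψ : IntervalIntegrable (fun x => f x * ψ x) volume a b :=
    (hf.mul hψc).intervalIntegrable_of_Icc hab
  have hFψ' : IntervalIntegrable (fun x => F x * ψ' x) volume a b :=
    (hFc.mul hψ').intervalIntegrable_of_Icc hab
  have hparts := integral_deriv_mul_eq_sub_of_hasDerivWithinAt (uIcc_of_le hab ▸ hF)
    (uIcc_of_le hab ▸ hψ) (hf.intervalIntegrable_of_Icc hab) (hψ'.intervalIntegrable_of_Icc hab)
  rw [integral_add hfψ hFψ', show F a = 0 from integral_same, zero_mul, sub_zero,
    ← eq_sub_iff_add_eq] at hparts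
  have hrem : ‖∫ x in a..b, F x * ψ' x‖ ≤ K * ∫ x in a..b, ‖ψ' x‖ := by
    rw [← intervalIntegral.integral_const_mul]
    refine (intervalIntegral.norm_integral_le_integral_norm hab).trans
      (integral_mono_on hab hFψ'.norm ((hψ'.norm.const_smul K).intervalIntegrable_of_Icc hab)
        fun x hx => (norm_mul_le _ _).trans ?_)
    exact mul_le_mul_of_nonneg_right (hK x hx) (norm_nonneg _)
  calc ‖∫ x in a..b, f x * ψ x‖ ≤ ‖F b * ψ b‖ + ‖∫ x in a..b, F x * ψ' x‖ := by
        rw [hparts]; exact norm_sub_le _ _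
    _ ≤ K * ‖ψ b‖ + K * ∫ x in a..b, ‖ψ' x‖ := by
        gcongr
        exact (norm_mul_le _ _).trans
          (mul_le_mul_of_nonneg_right (hK b (right_mem_Icc.2 hab)) (norm_nonneg _))
    _ = K * (‖ψ b‖ + ∫ x in a..b, ‖ψ' x‖) := by ring

theorem integral_abs_deriv_inv_le {a b L : ℝ} {φ' φ'' : ℝ → ℝ} (hab : a ≤ b) (hL : 0 < L)
    (hφ' : ∀ x ∈ Icc a b, HasDerivWithinAt φ' (φ'' x) (Icc a b) x)
    (hφ'' : ContinuousOn φ'' (Icc a b))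
    (hsign : (∀ x ∈ Icc a b, 0 ≤ φ'' x) ∨ (∀ x ∈ Icc a b, φ'' x ≤ 0))
    (hbig : ∀ x ∈ Icc a b, L ≤ |φ' x|) :
    ∫ x in a..b, |-φ'' x / φ' x ^ 2| ≤ 2 / L := by
  have hne : ∀ x ∈ Icc a b, φ' x ≠ 0 := fun x hx => abs_pos.1 (hL.trans_le (hbig x hx))
  have hinv : ∀ x ∈ Icc a b, |(φ' x)⁻¹| ≤ 1 / L := fun x hx => by
    rw [abs_inv, one_div]; exact inv_anti₀ hL (hbig x hx)
  have hφ'c : ContinuousOn φ' (Icc a b) := fun x hx => (hφ' x hx).continuousWithinAt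
  rw [integral_abs_eq_abs_sub_of_hasDerivWithinAt hab (fun x hx => (hφ' x hx).inv (hne x hx))
    (hφ''.neg.div (hφ'c.pow 2) fun x hx => pow_ne_zero 2 (hne x hx))
    (hsign.symm.imp
      (fun h x hx => div_nonneg (neg_nonneg.2 (h x hx)) (sq_nonneg _))
      (fun h x hx => div_nonpos_of_nonpos_of_nonneg (neg_nonpos.2 (h x hx)) (sq_nonneg _)))]
  rw [Pi.inv_apply, Pi.inv_apply, show 2 / L = 1 / L + 1 / L by ring]
  linarith [abs_sub (φ' b)⁻¹ (φ' a)⁻¹, hinv a (left_mem_Icc.2 hab), hinv b (right_mem_Icc.2 hab)]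

theorem norm_integral_cexp_le_of_le_abs_deriv {a b L : ℝ} {φ φ' φ'' : ℝ → ℝ} (hab : a ≤ b)
    (hL : 0 < L) (hφ : ∀ x ∈ Icc a b, HasDerivWithinAt φ (φ' x) (Icc a b) x)
    (hφ' : ∀ x ∈ Icc a b, HasDerivWithinAt φ' (φ'' x) (Icc a b) x)
    (hφ'' : ContinuousOn φ'' (Icc a b))
    (hsign : (∀ x ∈ Icc a b, 0 ≤ φ'' x) ∨ (∀ x ∈ Icc a b, φ'' x ≤ 0))
    (hbig : ∀ x ∈ Icc a b, L ≤ |φ' x|) :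
    ‖∫ x in a..b, Complex.exp (Complex.I * φ x)‖ ≤ 4 / L := by
  have hne : ∀ x ∈ Icc a b, φ' x ≠ 0 := fun x hx => abs_pos.1 (hL.trans_le (hbig x hx))
  have hφ'c : ContinuousOn φ' (Icc a b) := fun x hx => (hφ' x hx).continuousWithinAt
  -- `e^{iφ} = u · (e^{iφ})'` with `u = -i / φ'`
  set u : ℝ → ℂ := fun x => -Complex.I * ((φ' x)⁻¹ : ℝ)
  set u' : ℝ → ℂ := fun x => -Complex.I * ((-φ'' x / φ' x ^ 2 : ℝ) : ℂ)
  set v : ℝ → ℂ := fun x => Complex.exp (Complex.I * φ x)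
  have hu : ∀ x ∈ uIcc a b, HasDerivWithinAt u (u' x) (uIcc a b) x := by
    rw [uIcc_of_le hab]
    exact fun x hx => ((hφ' x hx).inv (hne x hx)).ofReal_comp.const_mul _
  have hv : ∀ x ∈ uIcc a b, HasDerivWithinAt v (v x * (Complex.I * φ' x)) (uIcc a b) x := by
    rw [uIcc_of_le hab]
    exact fun x hx => ((hφ x hx).ofReal_comp.const_mul _).cexp
  have huv' : ∀ x ∈ uIcc a b, u x * (v x * (Complex.I * φ' x)) = v x := by
    rw [uIcc_of_le hab]
    intro x hx
    have : ((φ' x)⁻¹ : ℝ) * (φ' x : ℂ) = 1 := by exact_mod_cast inv_mul_cancel₀ (hne x hx)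
    linear_combination v x * this - v x * ((φ' x)⁻¹ : ℝ) * φ' x * Complex.I_sq
  have hvc : ContinuousOn v (Icc a b) := by
    rw [← uIcc_of_le hab]; exact fun x hx => (hv x hx).continuousWithinAt
  have hu'c : ContinuousOn u' (Icc a b) := continuousOn_const.mul
    (Complex.continuous_ofReal.comp_continuousOn
      (hφ''.neg.div (hφ'c.pow 2) fun x hx => pow_ne_zero 2 (hne x hx)))
  have hnorm : ∀ (w : ℝ) (x : ℝ), ‖-Complex.I * w * v x‖ = |w| := fun w x => by
    simp [v, Complex.norm_exp_I_mul_ofReal]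
  have hparts := integral_mul_deriv_eq_deriv_mul_of_hasDerivWithinAt hu hv
    (hu'c.intervalIntegrable_of_Icc hab) (ContinuousOn.intervalIntegrable_of_Icc hab (by fun_prop))
  rw [integral_congr huv'] at hparts
  have hrem : ‖∫ x in a..b, u' x * v x‖ ≤ 2 / L :=
    (intervalIntegral.norm_integral_le_integral_norm hab).trans
      ((integral_congr fun x _ => hnorm _ x).trans_le
        (integral_abs_deriv_inv_le hab hL hφ' hφ'' hsign hbig))
  have hbdry : ∀ x ∈ Icc a b, ‖u x * v x‖ ≤ 1 / L := fun x hx => by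
    simp only [u, hnorm, abs_inv, one_div]
    exact inv_anti₀ hL (hbig x hx)
  rw [hparts]
  calc _ ≤ ‖u b * v b‖ + ‖u a * v a‖ + ‖∫ x in a..b, u' x * v x‖ :=
        norm_sub_le_of_le (norm_sub_le _ _) le_rfl
    _ ≤ 1 / L + 1 / L + 2 / L := by
        gcongr
        exacts [hbdry b (right_mem_Icc.2 hab), hbdry a (left_mem_Icc.2 hab)]
    _ = 4 / L := by ring

theorem norm_integral_le_of_norm_integral_le_off_nbhd {E : Type*} [NormedAddCommGroup E]
    [NormedSpace ℝ E] {f : ℝ → E} {a b t₀ δ B : ℝ} (hδ : 0 ≤ δ) (hB : 0 ≤ B)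
    (ht₀ : t₀ ∈ Icc a b) (hf : ContinuousOn f (Icc a b)) (hf1 : ∀ x ∈ Icc a b, ‖f x‖ ≤ 1)
    (hoff : ∀ c d, a ≤ c → c ≤ d → d ≤ b → (∀ x ∈ Icc c d, δ ≤ |x - t₀|) →
      ‖∫ x in c..d, f x‖ ≤ B) :
    ‖∫ x in a..b, f x‖ ≤ 2 * B + 2 * δ := by
  have hab : a ≤ b := ht₀.1.trans ht₀.2
  set c := max a (t₀ - δ) with hc
  set d := min b (t₀ + δ) with hd
  have hac : a ≤ c := le_max_left _ _
  have hcd : c ≤ d :=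
    max_le (le_min hab (by linarith [ht₀.1])) (le_min (by linarith [ht₀.2]) (by linarith))
  have hdb : d ≤ b := min_le_left _ _
  have hint : ∀ u ∈ Icc a b, ∀ v ∈ Icc a b, IntervalIntegrable f volume u v := fun u hu v hv =>
    (hf.mono (uIcc_subset_Icc hu hv)).intervalIntegrable
  have hcI : c ∈ Icc a b := ⟨hac, hcd.trans hdb⟩
  have hdI : d ∈ Icc a b := ⟨hac.trans hcd, hdb⟩
  have hleft : ‖∫ x in a..c, f x‖ ≤ B := by
    rcases le_total (t₀ - δ) a with h | h
    · rw [hc, max_eq_left h, integral_same, norm_zero]; exact hB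
    · refine hoff a c le_rfl hac hcI.2 fun x hx => le_abs.2 (Or.inr ?_)
      linarith [hx.2, le_max_right a (t₀ - δ), max_eq_right h]
  have hright : ‖∫ x in d..b, f x‖ ≤ B := by
    rcases le_total b (t₀ + δ) with h | h
    · rw [hd, min_eq_left h, integral_same, norm_zero]; exact hB
    · refine hoff d b hdI.1 hdb le_rfl fun x hx => le_abs.2 (Or.inl ?_)
      linarith [hx.1, min_eq_right h]
  have hmid : ‖∫ x in c..d, f x‖ ≤ 2 * δ := by
    refine (norm_integral_le_of_norm_le_const fun x hx => hf1 x ?_).trans ?_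
    · rw [uIoc_of_le hcd] at hx
      exact ⟨hac.trans hx.1.le, hx.2.trans hdb⟩
    · rw [one_mul, abs_of_nonneg (sub_nonneg.2 hcd)]
      linarith [le_max_right a (t₀ - δ), min_le_right b (t₀ + δ)]
  rw [← integral_add_adjacent_intervals (hint a (left_mem_Icc.2 hab) c hcI)
      (hint c hcI b (right_mem_Icc.2 hab)),
    ← integral_add_adjacent_intervals (hint c hcI d hdI) (hint d hdI b (right_mem_Icc.2 hab)),
    ← add_assoc]
  linarith [norm_add₃_le (a := ∫ x in a..c, f x) (b := ∫ x in c..d, f x) (c := ∫ x in d..b, f x)]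

theorem norm_integral_cexp_le_of_subinterval_bound {a b M C s : ℝ} {φ g g' : ℝ → ℝ}
    (hab : a ≤ b) (hM : 0 < M) (hs : 0 < s) (hC : 0 ≤ C) (hφ : ContinuousOn φ (Icc a b))
    (hg : ∀ x ∈ Icc a b, HasDerivWithinAt g (g' x) (Icc a b) x)
    (hg' : ContinuousOn g' (Icc a b)) (hbig : ∀ x ∈ Icc a b, M ≤ |g' x|)
    (hsub : ∀ c d μ, a ≤ c → c ≤ d → d ≤ b → 0 < μ → (∀ x ∈ Icc c d, μ ≤ |g x|) →
      ‖∫ x in c..d, Complex.exp (Complex.I * φ x)‖ ≤ C * μ ^ (-1 / s)) :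
    ‖∫ x in a..b, Complex.exp (Complex.I * φ x)‖ ≤ (2 * C + 2) * M ^ (-1 / (s + 1)) := by
  set δ := M ^ (-1 / (s + 1))
  have hδ : 0 < δ := Real.rpow_pos_of_pos hM _
  have hbalance : (M * δ) ^ (-1 / s) = δ := by
    have hMδ : M * δ = M ^ (s / (s + 1)) := by
      rw [show s / (s + 1) = 1 + -1 / (s + 1) by field_simp; ring, Real.rpow_add hM, Real.rpow_one]
    rw [hMδ, ← Real.rpow_mul hM.le]
    congr 1
    field_simp
  obtain ⟨t₀, ht₀, hcenter⟩ := exists_mul_abs_sub_le_abs_of_le_abs_deriv hab hM hg hg' hbig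
  have := norm_integral_le_of_norm_integral_le_off_nbhd hδ.le (by positivity) ht₀
    (f := fun x => Complex.exp (Complex.I * φ x)) (by fun_prop)
    (fun x _ => (Complex.norm_exp_I_mul_ofReal _).le)
    fun c d hac hcd hdb hoff => hsub c d (M * δ) hac hcd hdb (mul_pos hM hδ) fun x hx =>
      (mul_le_mul_of_nonneg_left (hoff x hx) hM.le).trans
        (hcenter x ⟨hac.trans hx.1, hx.2.trans hdb⟩)
  rw [hbalance] at this
  linarith

/-- `p j` stands for the `j`-th derivative of the phase `p 0`; phrasing the bound for such chains
makes it stable under restriction to subintervals. -/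
def VanDerCorputBound (k : ℕ) (C : ℝ) : Prop :=
  ∀ (a b M : ℝ) (p : ℕ → ℝ → ℝ), a ≤ b → 0 < M →
    (∀ j < k, ∀ x ∈ Icc a b, HasDerivWithinAt (p j) (p (j + 1) x) (Icc a b) x) →
    ContinuousOn (p k) (Icc a b) → (∀ x ∈ Icc a b, M ≤ |p k x|) →
    ‖∫ x in a..b, Complex.exp (Complex.I * p 0 x)‖ ≤ C * M ^ (-1 / (k : ℝ))

theorem vanDerCorputBound_two : VanDerCorputBound 2 10 := by
  intro a b M p hab hM hp hp2 hbig
  have hsign : (∀ x ∈ Icc a b, 0 ≤ p 2 x) ∨ (∀ x ∈ Icc a b, p 2 x ≤ 0) :=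
    (forall_le_or_forall_le_neg_of_le_abs hM hp2 hbig).imp
      (fun h x hx => hM.le.trans (h x hx)) fun h x hx => (h x hx).trans (by linarith)
  have := norm_integral_cexp_le_of_subinterval_bound (C := 4) (s := 1) hab hM one_pos
    (by norm_num) (fun x hx => (hp 0 (by norm_num) x hx).continuousWithinAt)
    (hp 1 (by norm_num)) hp2 hbig fun c d μ hac hcd hdb hμ hsub => by
      have hcd_ab : Icc c d ⊆ Icc a b := Icc_subset_Icc hac hdb
      rw [div_one, Real.rpow_neg_one, ← div_eq_mul_inv]
      exact norm_integral_cexp_le_of_le_abs_deriv hcd hμ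
        (fun x hx => (hp 0 (by norm_num) x (hcd_ab hx)).mono hcd_ab)
        (fun x hx => (hp 1 (by norm_num) x (hcd_ab hx)).mono hcd_ab) (hp2.mono hcd_ab)
        (hsign.imp (fun h x hx => h x (hcd_ab hx)) fun h x hx => h x (hcd_ab hx)) hsub
  norm_num at this ⊢
  exact this

theorem VanDerCorputBound.succ {k : ℕ} {C : ℝ} (hk : 1 ≤ k) (hC : 0 ≤ C)
    (h : VanDerCorputBound k C) : VanDerCorputBound (k + 1) (2 * C + 2) := by
  intro a b M p hab hM hp hpk hbig
  have hk' : (0 : ℝ) < k := by exact_mod_cast hk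
  have := norm_integral_cexp_le_of_subinterval_bound hab hM hk' hC
    (fun x hx => (hp 0 (by omega) x hx).continuousWithinAt) (hp k (by omega)) hpk hbig
    fun c d μ hac hcd hdb hμ hsub => by
      have hcd_ab : Icc c d ⊆ Icc a b := Icc_subset_Icc hac hdb
      exact h c d μ p hcd hμ (fun j hj x hx => (hp j (by omega) x (hcd_ab hx)).mono hcd_ab)
        (fun x hx => (hp k (by omega) x (hcd_ab hx)).continuousWithinAt.mono hcd_ab) hsub
  push_cast
  exact this

theorem exists_vanDerCorputBound {k : ℕ} (hk : 2 ≤ k) : ∃ C, 0 < C ∧ VanDerCorputBound k C := by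
  induction k, hk using Nat.le_induction with
  | base => exact ⟨10, by norm_num, vanDerCorputBound_two⟩
  | succ k hk ih =>
    obtain ⟨C, hC, h⟩ := ih
    exact ⟨2 * C + 2, by positivity, h.succ (by omega) hC.le⟩

end VanDerCorput

/-- Van der Corput lemma for k-th derivatives, k ≥ 2. -/
theorem van_der_corput_kth (k : ℕ) (hk : 2 ≤ k) :
    ∃ c : ℝ, 0 < c ∧
      ∀ (a b M : ℝ) (P : ℝ → ℝ) (ψ : ℝ → ℂ), a ≤ b → 0 < M →
        ContDiffOn ℝ k P (Set.Icc a b) →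
        (∀ x ∈ Set.Icc a b, M ≤ |iteratedDerivWithin k P (Set.Icc a b) x|) →
        ContDiffOn ℝ 1 ψ (Set.Icc a b) →
        ‖∫ x in a..b, Complex.exp (Complex.I * (P x : ℂ)) * ψ x‖ ≤
          c * M ^ (-(1 : ℝ) / k) *
            (‖ψ b‖ + ∫ x in a..b, ‖derivWithin ψ (Set.Icc a b) x‖) := by
  obtain ⟨C, hC, hbound⟩ := VanDerCorput.exists_vanDerCorputBound hk
  refine ⟨C, hC, fun a b M P ψ hab hM hP hbig hψ => ?_⟩
  rcases hab.eq_or_lt with rfl | hlt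
  · simp only [integral_same, norm_zero, add_zero]
    positivity
  have hU := uniqueDiffOn_Icc hlt
  have hPc := hP.continuousOn
  refine VanDerCorput.norm_integral_mul_le_of_norm_primitive_le hab (by fun_prop)
    (fun x hx => ((hψ.differentiableOn one_ne_zero) x hx).hasDerivWithinAt)
    (hψ.continuousOn_derivWithin hU le_rfl) fun x hx => ?_
  have hsub : Icc a x ⊆ Icc a b := Icc_subset_Icc_right hx.2
  simpa using hbound a x M (fun j => iteratedDerivWithin j P (Icc a b)) hx.1 hM
    (fun j hj y hy => (hP.hasDerivWithinAt_iteratedDerivWithin hU hj (hsub hy)).mono hsub)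
    ((hP.continuousOn_iteratedDerivWithin le_rfl hU).mono hsub) fun y hy => hbig y (hsub hy)
end

section
/- Let P be a real-valued C^2 function on [a,b] such that P' is monotonic on [a,b] and |P'(x)| ≥ M > 0 for all x in [a,b], and let ψ be a complex-valued C^1 function on [a,b]. Then there is an absolute constant c such that |∫_a^b e^{iP(x)} ψ(x) dx| ≤ c M^{-1} (|ψ(b)| + ∫_a^b |ψ'(x)| dx). -/
/-!
Writing `e^{iP} = (e^{iP})' / (iP')` and integrating by parts bounds `∫ e^{iP}` over any
subinterval `[a, x]` by the boundary terms `2 / M` plus the total variation of `1 / P'`, which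
is at most `2 / M` because `P'` is monotone. Then `ψ` is brought in by a second integration by
parts against the primitive `x ↦ ∫_a^x e^{iP}`.
-/

open Set MeasureTheory intervalIntegral Complex

theorem norm_integral_mul_le_of_norm_primitive_le {A : Type*} [NormedRing A] [NormedAlgebra ℝ A]
    [CompleteSpace A] {f ψ ψ' : ℝ → A} {a b C : ℝ} (hab : a ≤ b) (hf : ContinuousOn f (Icc a b))
    (hψ : ∀ x ∈ Icc a b, HasDerivWithinAt ψ (ψ' x) (Icc a b) x)
    (hψ' : IntervalIntegrable ψ' volume a b) (hF : ∀ x ∈ Icc a b, ‖∫ t in a..x, f t‖ ≤ C) :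
    ‖∫ x in a..b, f x * ψ x‖ ≤ C * (‖ψ b‖ + ∫ x in a..b, ‖ψ' x‖) := by
  have hfi : IntervalIntegrable f volume a b := hf.intervalIntegrable_of_Icc hab
  have hIoo : Ioo (min a b) (max a b) = Ioo a b := by rw [min_eq_left hab, max_eq_right hab]
  have hFd : ∀ x ∈ Ioo (min a b) (max a b), HasDerivAt (fun x => ∫ t in a..x, f t) (f x) x := by
    rw [hIoo]
    exact fun x hx => integral_hasDerivAt_right
      ((hf.mono (Icc_subset_Icc_right hx.2.le)).intervalIntegrable_of_Icc hx.1.le)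
      ((hf.mono Ioo_subset_Icc_self).stronglyMeasurableAtFilter isOpen_Ioo x hx)
      (hf.continuousAt (Icc_mem_nhds hx.1 hx.2))
  have hψd : ∀ x ∈ Ioo (min a b) (max a b), HasDerivAt ψ (ψ' x) x := by
    rw [hIoo]
    exact fun x hx => (hψ x (Ioo_subset_Icc_self hx)).hasDerivAt (Icc_mem_nhds hx.1 hx.2)
  have hψc : ContinuousOn ψ (uIcc a b) :=
    uIcc_of_le hab ▸ fun x hx => (hψ x hx).continuousWithinAt
  have hparts : ∫ x in a..b, f x * ψ x =
      (∫ t in a..b, f t) * ψ b - ∫ x in a..b, (∫ t in a..x, f t) * ψ' x := by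
    rw [integral_mul_deriv_eq_deriv_mul_of_hasDerivAt
      (continuousOn_primitive_interval' hfi left_mem_uIcc) hψc hFd hψd hfi hψ', integral_same]
    simp
  have hFψ' : ∀ x ∈ Icc a b, ‖(∫ t in a..x, f t) * ψ' x‖ ≤ C * ‖ψ' x‖ := fun x hx =>
    (norm_mul_le _ _).trans (mul_le_mul_of_nonneg_right (hF x hx) (norm_nonneg _))
  calc ‖∫ x in a..b, f x * ψ x‖
      ≤ ‖(∫ t in a..b, f t) * ψ b‖ + ‖∫ x in a..b, (∫ t in a..x, f t) * ψ' x‖ := by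
        rw [hparts]; exact norm_sub_le _ _
    _ ≤ C * ‖ψ b‖ + ∫ x in a..b, C * ‖ψ' x‖ := by
        gcongr
        · exact (norm_mul_le _ _).trans
            (mul_le_mul_of_nonneg_right (hF b (right_mem_Icc.2 hab)) (norm_nonneg _))
        · exact norm_integral_le_of_norm_le hab
            (ae_of_all _ fun x hx => hFψ' x (Ioc_subset_Icc_self hx)) (hψ'.norm.const_mul C)
    _ = C * (‖ψ b‖ + ∫ x in a..b, ‖ψ' x‖) := by
        rw [intervalIntegral.integral_const_mul, mul_add]

theorem integral_abs_deriv_div_sq_eq {a b : ℝ} {g g' : ℝ → ℝ} (hab : a ≤ b)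
    (hg : ∀ x ∈ Icc a b, HasDerivWithinAt g (g' x) (Icc a b) x)
    (hg' : IntervalIntegrable g' volume a b) (hg0 : ∀ x ∈ Icc a b, g x ≠ 0)
    (hsign : (∀ x ∈ Icc a b, 0 ≤ g' x) ∨ ∀ x ∈ Icc a b, g' x ≤ 0) :
    ∫ x in a..b, |g' x| / g x ^ 2 = |(g a)⁻¹ - (g b)⁻¹| := by
  have hgc : ContinuousOn g (Icc a b) := fun x hx => (hg x hx).continuousWithinAt
  have hftc : ∫ x in a..b, g' x / g x ^ 2 = (g a)⁻¹ - (g b)⁻¹ := by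
    have hderiv : ∀ x ∈ Ioo a b,
        HasDerivWithinAt (fun y => -(g y)⁻¹) (g' x / g x ^ 2) (Ioi x) x := fun x hx => by
      have := ((hg x (Ioo_subset_Icc_self hx)).hasDerivAt (Icc_mem_nhds hx.1 hx.2)).fun_inv
        (hg0 x (Ioo_subset_Icc_self hx))
      simpa only [neg_div, neg_neg] using this.fun_neg.hasDerivWithinAt
    have hint : IntervalIntegrable (fun x => g' x / g x ^ 2) volume a b :=
      hg'.mul_continuousOn <|
        uIcc_of_le hab ▸ (hgc.pow 2).inv₀ fun x hx => pow_ne_zero 2 (hg0 x hx)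
    rw [integral_eq_sub_of_hasDeriv_right_of_le hab (hgc.inv₀ hg0).neg hderiv hint]
    simp only [Pi.neg_apply, Pi.inv_apply]
    ring
  rcases hsign with hpos | hneg
  · rw [← hftc, abs_of_nonneg (integral_nonneg hab fun x hx =>
      div_nonneg (hpos x hx) (sq_nonneg _))]
    refine integral_congr fun x hx => ?_
    rw [abs_of_nonneg (hpos x (uIcc_of_le hab ▸ hx))]
  · rw [← hftc, ← abs_neg, ← intervalIntegral.integral_neg, abs_of_nonneg (integral_nonneg hab
      fun x hx => neg_nonneg.2 (div_nonpos_of_nonpos_of_nonneg (hneg x hx) (sq_nonneg _)))]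
    refine integral_congr fun x hx => ?_
    simp only [abs_of_nonpos (hneg x (uIcc_of_le hab ▸ hx)), neg_div]

theorem integral_cexp_mul_I_eq {a b : ℝ} {P g g' : ℝ → ℝ} (hab : a ≤ b)
    (hP : ∀ x ∈ Icc a b, HasDerivWithinAt P (g x) (Icc a b) x)
    (hg : ∀ x ∈ Icc a b, HasDerivWithinAt g (g' x) (Icc a b) x)
    (hg' : IntervalIntegrable g' volume a b) (hg0 : ∀ x ∈ Icc a b, g x ≠ 0) :
    ∫ x in a..b, cexp (I * P x) = cexp (I * P b) / (I * g b) - cexp (I * P a) / (I * g a) -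
      I * ∫ x in a..b, cexp (I * P x) * (g' x / g x ^ 2 : ℝ) := by
  have hgc : ContinuousOn g (Icc a b) := fun x hx => (hg x hx).continuousWithinAt
  have hPc : ContinuousOn P (Icc a b) := fun x hx => (hP x hx).continuousWithinAt
  -- `1 / (I * g)` is written as `-I * g⁻¹`, so that its derivative is that of the real `g⁻¹`
  set v : ℝ → ℂ := fun x => -I * ((g x)⁻¹ : ℝ)
  set v' : ℝ → ℂ := fun x => -I * ((-g' x / g x ^ 2 : ℝ) : ℂ)
  have hu : ∀ x ∈ uIcc a b,
      HasDerivWithinAt (fun x => cexp (I * P x)) (cexp (I * P x) * (I * g x)) (uIcc a b) x := by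
    rw [uIcc_of_le hab]
    exact fun x hx => ((hP x hx).ofReal_comp.const_mul I).cexp
  have hv : ∀ x ∈ uIcc a b, HasDerivWithinAt v (v' x) (uIcc a b) x := by
    rw [uIcc_of_le hab]
    exact fun x hx => ((hg x hx).fun_inv (hg0 x hx)).ofReal_comp.const_mul (-I)
  have hu'i : IntervalIntegrable (fun x => cexp (I * P x) * (I * g x)) volume a b :=
    ContinuousOn.intervalIntegrable_of_Icc hab (by fun_prop)
  have hv'i : IntervalIntegrable v' volume a b := by
    have hR : IntervalIntegrable (fun x => -g' x / g x ^ 2) volume a b :=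
      hg'.neg.mul_continuousOn <|
        uIcc_of_le hab ▸ (hgc.pow 2).inv₀ fun x hx => pow_ne_zero 2 (hg0 x hx)
    have hC : IntervalIntegrable (fun x => ((-g' x / g x ^ 2 : ℝ) : ℂ)) volume a b :=
      ⟨hR.1.ofReal, hR.2.ofReal⟩
    exact hC.const_mul (-I)
  have hv_eq : ∀ x, v x = 1 / (I * g x) := fun x => by
    simp only [v, ofReal_inv, one_div, mul_inv, inv_I]
  have huv' : ∀ x, cexp (I * P x) * v' x = I * (cexp (I * P x) * (g' x / g x ^ 2 : ℝ)) :=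
      fun x => by
    simp only [v']
    push_cast
    ring
  have hparts := integral_mul_deriv_eq_deriv_mul_of_hasDerivWithinAt hu hv hu'i hv'i
  simp only [huv', intervalIntegral.integral_const_mul] at hparts
  have hu'v : ∫ x in a..b, cexp (I * P x) * (I * g x) * v x = ∫ x in a..b, cexp (I * P x) := by
    refine integral_congr fun x hx => ?_
    have hgx : (g x : ℂ) ≠ 0 := ofReal_ne_zero.2 (hg0 x (uIcc_of_le hab ▸ hx))
    simp only [hv_eq]
    field_simp
  rw [hv_eq, hv_eq, hu'v] at hparts
  linear_combination hparts

theorem norm_integral_cexp_mul_I_le {a b M : ℝ} {P g g' : ℝ → ℝ} (hab : a ≤ b) (hM : 0 < M)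
    (hP : ∀ x ∈ Icc a b, HasDerivWithinAt P (g x) (Icc a b) x)
    (hg : ∀ x ∈ Icc a b, HasDerivWithinAt g (g' x) (Icc a b) x)
    (hg' : IntervalIntegrable g' volume a b)
    (hsign : (∀ x ∈ Icc a b, 0 ≤ g' x) ∨ ∀ x ∈ Icc a b, g' x ≤ 0)
    (hgM : ∀ x ∈ Icc a b, M ≤ |g x|) :
    ‖∫ x in a..b, cexp (I * P x)‖ ≤ 4 * M⁻¹ := by
  have hg0 : ∀ x ∈ Icc a b, g x ≠ 0 := fun x hx => abs_pos.1 (hM.trans_le (hgM x hx))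
  have hinv : ∀ x ∈ Icc a b, |g x|⁻¹ ≤ M⁻¹ := fun x hx => inv_anti₀ hM (hgM x hx)
  have hboundary : ∀ x, ‖cexp (I * P x) / (I * g x)‖ = |g x|⁻¹ := fun x => by
    simp [norm_exp_I_mul_ofReal]
  have hintegrand : ∀ x, ‖cexp (I * P x) * (g' x / g x ^ 2 : ℝ)‖ = |g' x| / g x ^ 2 :=
    fun x => by simp [norm_exp_I_mul_ofReal]
  calc ‖∫ x in a..b, cexp (I * P x)‖
      ≤ |g b|⁻¹ + |g a|⁻¹ + ∫ x in a..b, |g' x| / g x ^ 2 := by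
        rw [integral_cexp_mul_I_eq hab hP hg hg' hg0, ← hboundary, ← hboundary]
        refine (norm_sub_le _ _).trans (add_le_add (norm_sub_le _ _) ?_)
        rw [norm_mul, norm_I, one_mul]
        exact (intervalIntegral.norm_integral_le_integral_norm hab).trans_eq
          (by simp_rw [hintegrand])
    _ ≤ 4 * M⁻¹ := by
        rw [integral_abs_deriv_div_sq_eq hab hg hg' hg0 hsign]
        have := abs_sub (g a)⁻¹ (g b)⁻¹
        rw [abs_inv, abs_inv] at this
        linarith [hinv a (left_mem_Icc.2 hab), hinv b (right_mem_Icc.2 hab)]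

/-- Van der Corput lemma, first derivative case: P is C², P' monotone, |P'| ≥ M. -/
theorem van_der_corput_first : ∃ c : ℝ, 0 < c ∧
    ∀ (a b M : ℝ) (P : ℝ → ℝ) (ψ : ℝ → ℂ), a ≤ b → 0 < M →
      ContDiffOn ℝ 2 P (Set.Icc a b) →
      (MonotoneOn (derivWithin P (Set.Icc a b)) (Set.Icc a b) ∨
        AntitoneOn (derivWithin P (Set.Icc a b)) (Set.Icc a b)) →
      (∀ x ∈ Set.Icc a b, M ≤ |derivWithin P (Set.Icc a b) x|) →
      ContDiffOn ℝ 1 ψ (Set.Icc a b) →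
      ‖∫ x in a..b, Complex.exp (Complex.I * (P x : ℂ)) * ψ x‖ ≤
        c * M⁻¹ * (‖ψ b‖ + ∫ x in a..b, ‖derivWithin ψ (Set.Icc a b) x‖) := by
  refine ⟨4, by norm_num, fun a b M P ψ hab hM hP hmono hPM hψ => ?_⟩
  rcases hab.eq_or_lt with rfl | hlt
  · simp only [integral_same, norm_zero]
    positivity
  set s := Icc a b
  have hs : UniqueDiffOn ℝ s := uniqueDiffOn_Icc hlt
  set g := derivWithin P s
  have hg : ContDiffOn ℝ 1 g s := hP.derivWithin hs (by norm_num)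
  have hPd : ∀ x ∈ s, HasDerivWithinAt P (g x) s x := fun x hx =>
    (hP.differentiableOn (by norm_num) x hx).hasDerivWithinAt
  have hgd : ∀ x ∈ s, HasDerivWithinAt g (derivWithin g s x) s x := fun x hx =>
    (hg.differentiableOn one_ne_zero x hx).hasDerivWithinAt
  have hψd : ∀ x ∈ s, HasDerivWithinAt ψ (derivWithin ψ s x) s x := fun x hx =>
    (hψ.differentiableOn one_ne_zero x hx).hasDerivWithinAt
  have hsign : (∀ x ∈ s, 0 ≤ derivWithin g s x) ∨ ∀ x ∈ s, derivWithin g s x ≤ 0 :=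
    hmono.imp (fun h _ _ => h.derivWithin_nonneg) (fun h _ _ => h.derivWithin_nonpos)
  have hosc : ∀ x ∈ s, ‖∫ t in a..x, cexp (I * P t)‖ ≤ 4 * M⁻¹ := fun x hx => by
    have hsub : Icc a x ⊆ s := Icc_subset_Icc_right hx.2
    exact norm_integral_cexp_mul_I_le hx.1 hM (fun t ht => (hPd t (hsub ht)).mono hsub)
      (fun t ht => (hgd t (hsub ht)).mono hsub)
      (((hg.continuousOn_derivWithin hs le_rfl).mono hsub).intervalIntegrable_of_Icc hx.1)
      (hsign.imp (fun h t ht => h t (hsub ht)) (fun h t ht => h t (hsub ht)))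
      (fun t ht => hPM t (hsub ht))
  have hexp : ContinuousOn (fun x => cexp (I * P x)) s := by
    have := hP.continuousOn
    fun_prop
  simpa only [mul_assoc] using norm_integral_mul_le_of_norm_primitive_le hab hexp hψd
    ((hψ.continuousOn_derivWithin hs le_rfl).intervalIntegrable_of_Icc hab) hosc
end

section
/- Let f(x,y) be a homogeneous polynomial of degree n ≥ 2 in two real variables whose Hessian determinant (∂²f/∂x²)(∂²f/∂y²) − (∂²f/∂x∂y)² is identically zero. Then there exist real constants c and d, not both zero, and a real constant λ such that f(x,y) = λ(cx + dy)^n. -/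
/-!
Put `p(x) = f(x, 1)`. Euler's identity expresses the second partials of `f` at `(x, 1)` through
`p, p', p''`, and the Hessian becomes `(n - 1) (n p p'' - (n - 1) p'²)`. At a complex root `z` of
`p` of multiplicity `m`, the lowest-order terms of `n p p'' = (n - 1) p'²` give
`n m (m - 1) = (n - 1) m²`, i.e. `m = n`; as `deg p ≤ n`, `p = a (x - z)^n`, and `z` is real since
`conj z` is a root as well. Rehomogenizing gives `f = a (x - z y)^n`.
-/

namespace Polynomial

section CommRing

variable {R : Type*} [CommRing R]

/-- `n p p'' = (n - 1) p'²` says that `(p ^ (1 / n))'' = 0`. -/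
structure SatisfiesPowerODE (n : ℕ) (p : R[X]) : Prop where
  eq : C (n : R) * (p * derivative (derivative p)) = C ((n : R) - 1) * derivative p ^ 2

lemma X_sub_C_mul_derivative_X_sub_C_pow_mul (z : R) (m : ℕ) (r : R[X]) :
    (X - C z) * derivative ((X - C z) ^ m * r) =
      (X - C z) ^ m * (C (m : R) * r + (X - C z) * derivative r) := by
  cases m with
  | zero => simp
  | succ k => simp only [derivative_mul, derivative_X_sub_C_pow, Nat.add_sub_cancel]; ring

theorem SatisfiesPowerODE.map {S : Type*} [CommRing S] (f : R →+* S) {n : ℕ} {p : R[X]}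
    (hODE : SatisfiesPowerODE n p) : SatisfiesPowerODE n (p.map f) where
  eq := by simpa [derivative_map] using congrArg (Polynomial.map f) hODE.eq

end CommRing

theorem SatisfiesPowerODE.rootMultiplicity_eq {K : Type*} [CommRing K] [IsDomain K] [CharZero K]
    {n : ℕ} {p : K[X]} (hODE : SatisfiesPowerODE n p) (hp : p ≠ 0) {z : K} (hz : p.IsRoot z) :
    p.rootMultiplicity z = n := by
  set m := p.rootMultiplicity z
  obtain ⟨r, hpr, hrz⟩ := p.exists_eq_pow_rootMultiplicity_mul_and_not_dvd hp z
  rw [dvd_iff_isRoot] at hrz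
  set s := C (m : K) * r + (X - C z) * derivative r
  set t := C (m : K) * s + (X - C z) * derivative s
  -- `(X - z) d/dX` multiplies the cofactor of `(X - z)^m` by `m` modulo `X - z`
  have hs : (X - C z) * derivative p = (X - C z) ^ m * s := by
    rw [hpr, X_sub_C_mul_derivative_X_sub_C_pow_mul]
  have ht : (X - C z) * derivative ((X - C z) * derivative p) = (X - C z) ^ m * t := by
    rw [hs, X_sub_C_mul_derivative_X_sub_C_pow_mul]
  have hsecond : (X - C z) ^ 2 * derivative (derivative p) =
      (X - C z) * derivative ((X - C z) * derivative p) - (X - C z) * derivative p := by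
    simp only [derivative_mul, derivative_X_sub_C]; ring
  have hcofactor : C (n : K) * (r * (t - s)) = C ((n : K) - 1) * s ^ 2 := by
    refine mul_left_cancel₀ (pow_ne_zero (2 * m) (X_sub_C_ne_zero z)) ?_
    calc (X - C z) ^ (2 * m) * (C (n : K) * (r * (t - s)))
        = C (n : K) * ((X - C z) ^ m * r) * ((X - C z) ^ m * t - (X - C z) ^ m * s) := by ring
      _ = (X - C z) ^ 2 * (C (n : K) * (p * derivative (derivative p))) := by
        rw [← hpr, ← hs, ← ht, ← hsecond]; ring
      _ = (X - C z) ^ 2 * (C ((n : K) - 1) * derivative p ^ 2) := by rw [hODE.eq]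
      _ = C ((n : K) - 1) * ((X - C z) * derivative p) ^ 2 := by ring
      _ = (X - C z) ^ (2 * m) * (C ((n : K) - 1) * s ^ 2) := by rw [hs]; ring
  have hm : (m : K) * (m - n) * r.eval z ^ 2 = 0 := by
    have := congrArg (eval z) hcofactor
    simp only [t, s, eval_mul, eval_C, eval_sub, eval_add, eval_pow, eval_X, sub_self, zero_mul,
      add_zero] at this
    linear_combination this
  have hm0 : (m : K) ≠ 0 := Nat.cast_ne_zero.mpr ((rootMultiplicity_pos hp).mpr hz).ne'
  have hmn : (m : K) - n = 0 := by simpa [hm0, IsRoot.def.not.mp hrz] using hm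
  exact_mod_cast sub_eq_zero.mp hmn

theorem SatisfiesPowerODE.eq_C_mul_X_sub_C_pow {K : Type*} [Field K] [CharZero K] [IsAlgClosed K]
    {n : ℕ} {p : K[X]} (hODE : SatisfiesPowerODE n p) (hdeg : p.natDegree ≤ n)
    (hpos : 0 < p.natDegree) :
    ∃ z, p = C p.leadingCoeff * (X - C z) ^ n := by
  have hp : p ≠ 0 := ne_zero_of_natDegree_gt hpos
  obtain ⟨z, hz⟩ := IsAlgClosed.exists_root p (natDegree_pos_iff_degree_pos.mp hpos).ne'
  have hdvd : (X - C z) ^ n ∣ p := hODE.rootMultiplicity_eq hp hz ▸ pow_rootMultiplicity_dvd p z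
  refine ⟨z, eq_leadingCoeff_mul_of_monic_of_dvd_of_natDegree_le ((monic_X_sub_C z).pow n) hdvd
    ?_⟩
  rwa [natDegree_pow, natDegree_X_sub_C, mul_one]

open ComplexConjugate in
theorem SatisfiesPowerODE.exists_eq_C_mul_linear_pow {n : ℕ} {p : ℝ[X]}
    (hODE : SatisfiesPowerODE n p) (hdeg : p.natDegree ≤ n) :
    ∃ c d a : ℝ, (c ≠ 0 ∨ d ≠ 0) ∧ p = C a * (C c * X + C d) ^ n := by
  rcases Nat.eq_zero_or_pos p.natDegree with hconst | hpos
  · exact ⟨0, 1, p.coeff 0, Or.inr one_ne_zero, by rw [eq_C_of_natDegree_eq_zero hconst]; simp⟩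
  have hn : n ≠ 0 := (hpos.trans_le hdeg).ne'
  have ha : p.leadingCoeff ≠ 0 := leadingCoeff_ne_zero.mpr (ne_zero_of_natDegree_gt hpos)
  obtain ⟨z, hz⟩ := (hODE.map (algebraMap ℝ ℂ)).eq_C_mul_X_sub_C_pow
    (by rwa [natDegree_map]) (by rwa [natDegree_map])
  rw [leadingCoeff_map] at hz
  have heval (w : ℂ) : aeval w p = p.leadingCoeff * (w - z) ^ n := by
    rw [← eval_map_algebraMap, hz]; simp
  have hzreal : conj z = z := by
    have hroot : aeval (conj z) p = 0 := by rw [aeval_conj, heval]; simp [hn]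
    rw [heval] at hroot
    simpa [ha, hn, sub_eq_zero] using hroot
  obtain ⟨x, rfl⟩ := Complex.conj_eq_iff_real.mp hzreal
  refine ⟨1, -x, p.leadingCoeff, Or.inl one_ne_zero,
    map_injective (algebraMap ℝ ℂ) (algebraMap ℝ ℂ).injective ?_⟩
  rw [hz]
  simp [sub_eq_add_neg]

end Polynomial

namespace MvPolynomial

open Polynomial (derivative)

section CommSemiring

variable {R : Type*} [CommSemiring R]

noncomputable abbrev dehomogenize : MvPolynomial (Fin 2) R →ₐ[R] Polynomial R :=
  aeval ![Polynomial.X, 1]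

lemma dehomogenize_pderiv_zero (φ : MvPolynomial (Fin 2) R) :
    dehomogenize (pderiv 0 φ) = derivative (dehomogenize φ) := by
  induction φ using MvPolynomial.induction_on with
  | C a => simp
  | add φ ψ hφ hψ => simp [hφ, hψ]
  | mul_X φ i hφ =>
    fin_cases i
    · simp [pderiv_X, hφ, Polynomial.derivative_mul]; ring
    · simp [pderiv_X, hφ]

lemma IsHomogeneous.natDegree_dehomogenize_le {φ : MvPolynomial (Fin 2) R} {n : ℕ}
    (h : φ.IsHomogeneous n) : (dehomogenize φ).natDegree ≤ n := by
  rw [φ.as_sum, map_sum]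
  refine Polynomial.natDegree_sum_le_of_forall_le _ _ fun d hd ↦ ?_
  have hdeg : d 0 + d 1 = n := by
    simpa [Finsupp.weight_apply, Finsupp.sum_fintype, Fin.sum_univ_two] using
      h (mem_support_iff.mp hd)
  rw [aeval_monomial]
  simp only [Finsupp.prod_pow, Fin.prod_univ_two, Matrix.cons_val_zero, Matrix.cons_val_one,
    one_pow, mul_one, ← Polynomial.C_eq_algebraMap]
  exact (Polynomial.natDegree_C_mul_X_pow_le _ _).trans (by omega)

lemma IsHomogeneous.X_mul_derivative_dehomogenize_add {φ : MvPolynomial (Fin 2) R} {n : ℕ}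
    (h : φ.IsHomogeneous n) :
    Polynomial.X * derivative (dehomogenize φ) + dehomogenize (pderiv 1 φ) =
      Polynomial.C (n : R) * dehomogenize φ := by
  simpa [Fin.sum_univ_two, dehomogenize_pderiv_zero, nsmul_eq_mul] using
    congrArg dehomogenize h.sum_X_mul_pderiv

lemma IsHomogeneous.eq_of_dehomogenize_eq {φ ψ : MvPolynomial (Fin 2) R} {n : ℕ}
    (hφ : φ.IsHomogeneous n) (hψ : ψ.IsHomogeneous n)
    (h : dehomogenize φ = dehomogenize ψ) : φ = ψ := by
  rw [← Polynomial.homogenize_eq_of_isHomogeneous hφ rfl,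
    ← Polynomial.homogenize_eq_of_isHomogeneous hψ h.symm]

end CommSemiring

theorem IsHomogeneous.satisfiesPowerODE_dehomogenize {K : Type*} [Field K] [CharZero K]
    {f : MvPolynomial (Fin 2) K} {n : ℕ} (hn : 1 < n) (hf : f.IsHomogeneous n)
    (hH : pderiv 0 (pderiv 0 f) * pderiv 1 (pderiv 1 f) - (pderiv 0 (pderiv 1 f)) ^ 2 = 0) :
    Polynomial.SatisfiesPowerODE n (dehomogenize f) where
  eq := by
    set p := dehomogenize f
    set A := dehomogenize (pderiv 1 f)
    set B := dehomogenize (pderiv 1 (pderiv 1 f))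
    have hN : Polynomial.C ((n : K) - 1) = Polynomial.C (n : K) - 1 := by simp
    have hA : A = Polynomial.C (n : K) * p - Polynomial.X * derivative p := by
      linear_combination hf.X_mul_derivative_dehomogenize_add
    have hA' : derivative A = (Polynomial.C (n : K) - 1) * derivative p -
        Polynomial.X * derivative (derivative p) := by
      rw [hA]; simp only [Polynomial.derivative_mul, Polynomial.derivative_C,
        Polynomial.derivative_sub, Polynomial.derivative_X]; ring
    have hB : B = (Polynomial.C (n : K) - 1) * A - Polynomial.X * derivative A := by
      have := (hf.pderiv (i := 1)).X_mul_derivative_dehomogenize_add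
      rw [Nat.cast_sub hn.le, Nat.cast_one, hN] at this
      linear_combination this
    have hHess : derivative (derivative p) * B - derivative A ^ 2 = 0 := by
      simpa [dehomogenize_pderiv_zero] using congrArg dehomogenize hH
    refine mul_left_cancel₀ (Polynomial.C_ne_zero.mpr (sub_ne_zero.mpr
      (Nat.cast_ne_one.mpr hn.ne'))) ?_
    rw [hN]
    linear_combination hHess - derivative (derivative p) * hB
      - derivative (derivative p) * (Polynomial.C (n : K) - 1) * hA
      + (derivative A + (Polynomial.C (n : K) - 1) * derivative p) * hA'

end MvPolynomial

open MvPolynomial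

/-- A homogeneous polynomial of degree n ≥ 2 in two variables whose Hessian determinant
vanishes identically is λ(cx+dy)^n. -/
theorem homogeneous_zero_hessian_is_power (n : ℕ) (hn : 2 ≤ n)
    (f : MvPolynomial (Fin 2) ℝ) (hf : f.IsHomogeneous n)
    (hH : pderiv 0 (pderiv 0 f) * pderiv 1 (pderiv 1 f) -
        (pderiv 0 (pderiv 1 f)) ^ 2 = 0) :
    ∃ c d lam : ℝ, (c ≠ 0 ∨ d ≠ 0) ∧
      f = C lam * (C c * X 0 + C d * X 1) ^ n := by
  obtain ⟨c, d, lam, hcd, hp⟩ :=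
    (hf.satisfiesPowerODE_dehomogenize hn hH).exists_eq_C_mul_linear_pow
      hf.natDegree_dehomogenize_le
  have hpow : (C lam * (C c * X 0 + C d * X 1) ^ n : MvPolynomial (Fin 2) ℝ).IsHomogeneous n := by
    simpa using (((isHomogeneous_C_mul_X c 0).add (isHomogeneous_C_mul_X d 1)).pow n).C_mul lam
  refine ⟨c, d, lam, hcd, hf.eq_of_dehomogenize_eq hpow ?_⟩
  rw [hp]
  simp
end

section
/- Let 0 < t < 1 and let s_i, α_i be reals with 1 < s_i < α_i. Let l, e be nonzero reals and λ₂, λ₃ nonzero reals, and suppose x₂ > 0 satisfies λ₂ l s_i(s_i−1) x₂^{s_i−2} + λ₃ e α_i(α_i−1) x₂^{α_i−2} = 0. Then there exist c > 0 and δ > 0 such that for all x > 0 with t < x/x₂ < 1/t and |x − x₂| < δ x₂, |λ₂ l s_i(s_i−1)(s_i−2) x^{s_i−3} + λ₃ e α_i(α_i−1)(α_i−2) x^{α_i−3}| ≥ c |λ₃| x₂^{α_i−3}. -/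
/-- Derivative lower bound in the proof of Lemma 4.1. -/
theorem two_term_derivative_lower_bound (t si αi l e lam2 lam3 x₂ : ℝ)
    (ht0 : 0 < t) (ht1 : t < 1) (hsi : 1 < si) (hsa : si < αi)
    (hl : l ≠ 0) (he : e ≠ 0) (hlam2 : lam2 ≠ 0) (hlam3 : lam3 ≠ 0) (hx₂ : 0 < x₂)
    (hzero : lam2 * l * si * (si - 1) * x₂ ^ (si - 2) +
        lam3 * e * αi * (αi - 1) * x₂ ^ (αi - 2) = 0) :
    ∃ c > (0 : ℝ), ∃ δ > (0 : ℝ), ∀ x : ℝ, 0 < x → t < x / x₂ → x / x₂ < 1 / t →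
      |x - x₂| < δ * x₂ →
      c * |lam3| * x₂ ^ (αi - 3) ≤
        |lam2 * l * si * (si - 1) * (si - 2) * x ^ (si - 3) +
          lam3 * e * αi * (αi - 1) * (αi - 2) * x ^ (αi - 3)| := by
  have hα1 : 1 < αi := hsi.trans hsa
  set B : ℝ := lam3 * e * αi * (αi - 1) with hB
  have hBne : B ≠ 0 := by
    apply mul_ne_zero (mul_ne_zero (mul_ne_zero hlam3 he) _)
    · intro h; linarith
    · intro h; linarith
  set f : ℝ → ℝ := fun x => lam2 * l * si * (si - 1) * (si - 2) * x ^ (si - 3) +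
      lam3 * e * αi * (αi - 1) * (αi - 2) * x ^ (αi - 3) with hf
  have hA : lam2 * l * si * (si - 1) * x₂ ^ (si - 2) = -(B * x₂ ^ (αi - 2)) := by
    linarith [hzero]
  have h1 : x₂ ^ (si - 3) = x₂ ^ (si - 2) * x₂ ^ (-1 : ℝ) := by
    rw [← Real.rpow_add hx₂]; ring_nf
  have h2 : x₂ ^ (αi - 3) = x₂ ^ (αi - 2) * x₂ ^ (-1 : ℝ) := by
    rw [← Real.rpow_add hx₂]; ring_nf
  have hfx₂ : f x₂ = B * (αi - si) * x₂ ^ (αi - 3) := by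
    simp only [hf]
    rw [h1, h2]
    have h3 : lam2 * l * si * (si - 1) * (si - 2) * (x₂ ^ (si - 2) * x₂ ^ (-1 : ℝ))
        = (lam2 * l * si * (si - 1) * x₂ ^ (si - 2)) * ((si - 2) * x₂ ^ (-1 : ℝ)) := by
      ring
    rw [h3, hA, hB]; ring
  have hx3 : 0 < x₂ ^ (αi - 3) := Real.rpow_pos_of_pos hx₂ _
  have habs : |f x₂| = |B| * (αi - si) * x₂ ^ (αi - 3) := by
    rw [hfx₂, abs_mul, abs_mul, abs_of_pos hx3, abs_of_pos (by linarith : (0:ℝ) < αi - si)]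
  have hfpos : 0 < |f x₂| := by
    rw [habs]
    have h4 : 0 < |B| := abs_pos.mpr hBne
    have h5 : 0 < αi - si := by linarith
    positivity
  have hcont : ContinuousAt f x₂ := by
    apply ContinuousAt.add
    · exact (Real.continuousAt_rpow_const x₂ (si - 3) (Or.inl hx₂.ne')).const_mul _
    · exact (Real.continuousAt_rpow_const x₂ (αi - 3) (Or.inl hx₂.ne')).const_mul _
  have hev : ∀ᶠ x in nhds x₂, |f x₂| / 2 < |f x| :=
    hcont.abs.eventually (eventually_gt_nhds (by linarith))
  obtain ⟨ε, hε, hball⟩ := Metric.eventually_nhds_iff.mp hev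
  have hBabs : |B| = |lam3| * (|e| * αi * (αi - 1)) := by
    rw [hB, abs_mul, abs_mul, abs_mul, abs_of_pos (by linarith : (0:ℝ) < αi),
      abs_of_pos (by linarith : (0:ℝ) < αi - 1)]
    ring
  refine ⟨|e| * αi * (αi - 1) * (αi - si) / 2, ?_, ε / x₂, by positivity, ?_⟩
  · have h6 : 0 < |e| := abs_pos.mpr he
    have h7 : 0 < αi - si := by linarith
    have h8 : 0 < αi - 1 := by linarith
    have h9 : 0 < αi := by linarith
    positivity
  · intro x hx _ _ hclose
    have hdist : dist x x₂ < ε := by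
      rw [Real.dist_eq]
      calc |x - x₂| < ε / x₂ * x₂ := hclose
        _ = ε := by field_simp
    have h5 := hball hdist
    have heq : |e| * αi * (αi - 1) * (αi - si) / 2 * |lam3| * x₂ ^ (αi - 3)
        = |f x₂| / 2 := by
      rw [habs, hBabs]; ring
    rw [heq]
    exact le_of_lt h5
end

section
/- Let f(x,y) = Σ f_{a,b} x^a y^b be a formal power series in two variables, and for m > 0 let e_m = min{a + mb : f_{a,b} ≠ 0} and f_m(x,y) = Σ_{a+mb = e_m} f_{a,b} x^a y^b. If the Hessian determinant of f vanishes identically as a formal power series, then for every m > 0 the Hessian determinant of the quasi-homogeneous part f_m vanishes identically. -/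
/-- Formal partial derivative in x of a power series given by its coefficients. -/
def dxPS (f : ℕ → ℕ → ℝ) : ℕ → ℕ → ℝ := fun a b => (a + 1 : ℕ) * f (a + 1) b

/-- Formal partial derivative in y. -/
def dyPS (f : ℕ → ℕ → ℝ) : ℕ → ℕ → ℝ := fun a b => (b + 1 : ℕ) * f a (b + 1)

/-- Product of two formal power series in two variables. -/
def mulPS (f g : ℕ → ℕ → ℝ) : ℕ → ℕ → ℝ := fun a b =>
  ∑ i ∈ Finset.range (a + 1), ∑ j ∈ Finset.range (b + 1),
    f i j * g (a - i) (b - j)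

/-- Formal Hessian determinant. -/
def hessPS (f : ℕ → ℕ → ℝ) : ℕ → ℕ → ℝ :=
  fun a b => mulPS (dxPS (dxPS f)) (dyPS (dyPS f)) a b -
    mulPS (dxPS (dyPS f)) (dxPS (dyPS f)) a b

/-- If the Hessian determinant of a formal power series f vanishes identically, then
so does the Hessian determinant of each lowest quasi-homogeneous part f_m. -/
theorem hessian_of_quasihomogeneous_part (f : ℕ → ℕ → ℝ)
    (hf : ∀ a b : ℕ, hessPS f a b = 0) (m : ℝ) (hm : 0 < m) (e : ℝ)
    (he₁ : ∃ a b : ℕ, f a b ≠ 0 ∧ (a : ℝ) + m * b = e)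
    (he₂ : ∀ a b : ℕ, f a b ≠ 0 → e ≤ (a : ℝ) + m * b) :
    ∀ a b : ℕ,
      hessPS (fun a' b' => if (a' : ℝ) + m * b' = e then f a' b' else 0) a b = 0 := by
  set g : ℕ → ℕ → ℝ := fun a' b' => if (a' : ℝ) + m * b' = e then f a' b' else 0 with hg
  -- if the total weight of the two coefficients is exactly 2e, the g-product equals the f-product
  have sub1 : ∀ x y u v : ℕ, (x : ℝ) + m * y + ((u : ℝ) + m * v) = 2 * e →
      g x y * g u v = f x y * f u v := by
    intro x y u v hw
    by_cases h1 : f x y = 0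
    · by_cases hc : (x : ℝ) + m * y = e <;> simp [hg, h1, hc]
    by_cases h2 : f u v = 0
    · by_cases hc : (u : ℝ) + m * v = e <;> simp [hg, h2, hc]
    have e1 := he₂ x y h1
    have e2 := he₂ u v h2
    have hx : (x : ℝ) + m * y = e := by linarith
    have hu : (u : ℝ) + m * v = e := by linarith
    simp [hg, hx, hu]
  -- if the total weight is not 2e, the g-product vanishes
  have sub2 : ∀ x y u v : ℕ, (x : ℝ) + m * y + ((u : ℝ) + m * v) ≠ 2 * e →
      g x y * g u v = 0 := by
    intro x y u v hw
    by_cases h1 : g x y = 0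
    · simp [h1]
    by_cases h2 : g u v = 0
    · simp [h2]
    have hx : (x : ℝ) + m * y = e := by
      by_contra hc; simp [hg, hc] at h1
    have hu : (u : ℝ) + m * v = e := by
      by_contra hc; simp [hg, hc] at h2
    exact absurd (by linarith) hw
  intro a b
  by_cases h : (a : ℝ) + m * b + 2 + 2 * m = 2 * e
  · -- on the critical weight, the Hessian of g agrees with that of f
    have key : hessPS g a b = hessPS f a b := by
      simp only [hessPS, mulPS, dxPS, dyPS]
      congr 1
      · refine Finset.sum_congr rfl fun i hi => Finset.sum_congr rfl fun j hj => ?_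
        have hia : i ≤ a := Nat.lt_succ_iff.mp (Finset.mem_range.mp hi)
        have hjb : j ≤ b := Nat.lt_succ_iff.mp (Finset.mem_range.mp hj)
        have hw : ((i + 1 + 1 : ℕ) : ℝ) + m * (j : ℕ) +
            (((a - i : ℕ) : ℝ) + m * ((b - j + 1 + 1 : ℕ) : ℝ)) = 2 * e := by
          push_cast [Nat.cast_sub hia, Nat.cast_sub hjb]
          linarith
        have h1 := sub1 (i + 1 + 1) j (a - i) (b - j + 1 + 1) hw
        linear_combination (((i + 1 : ℕ) : ℝ) * ((i + 1 + 1 : ℕ) : ℝ) *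
          ((b - j + 1 : ℕ) : ℝ) * ((b - j + 1 + 1 : ℕ) : ℝ)) * h1
      · refine Finset.sum_congr rfl fun i hi => Finset.sum_congr rfl fun j hj => ?_
        have hia : i ≤ a := Nat.lt_succ_iff.mp (Finset.mem_range.mp hi)
        have hjb : j ≤ b := Nat.lt_succ_iff.mp (Finset.mem_range.mp hj)
        have hw : ((i + 1 : ℕ) : ℝ) + m * ((j + 1 : ℕ) : ℝ) +
            (((a - i + 1 : ℕ) : ℝ) + m * ((b - j + 1 : ℕ) : ℝ)) = 2 * e := by
          push_cast [Nat.cast_sub hia, Nat.cast_sub hjb]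
          linarith
        have h1 := sub1 (i + 1) (j + 1) (a - i + 1) (b - j + 1) hw
        linear_combination (((i + 1 : ℕ) : ℝ) * ((j + 1 : ℕ) : ℝ) *
          ((a - i + 1 : ℕ) : ℝ) * ((b - j + 1 : ℕ) : ℝ)) * h1
    rw [key]; exact hf a b
  · -- off the critical weight, every term of the Hessian of g vanishes
    simp only [hessPS, mulPS, dxPS, dyPS]
    rw [Finset.sum_eq_zero, Finset.sum_eq_zero, sub_zero]
    · intro i hi
      refine Finset.sum_eq_zero fun j hj => ?_
      have hia : i ≤ a := Nat.lt_succ_iff.mp (Finset.mem_range.mp hi)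
      have hjb : j ≤ b := Nat.lt_succ_iff.mp (Finset.mem_range.mp hj)
      have hw : ((i + 1 : ℕ) : ℝ) + m * ((j + 1 : ℕ) : ℝ) +
          (((a - i + 1 : ℕ) : ℝ) + m * ((b - j + 1 : ℕ) : ℝ)) ≠ 2 * e := by
        push_cast [Nat.cast_sub hia, Nat.cast_sub hjb]
        intro hc; exact h (by linarith)
      have h1 := sub2 (i + 1) (j + 1) (a - i + 1) (b - j + 1) hw
      linear_combination (((i + 1 : ℕ) : ℝ) * ((j + 1 : ℕ) : ℝ) *
        ((a - i + 1 : ℕ) : ℝ) * ((b - j + 1 : ℕ) : ℝ)) * h1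
    · intro i hi
      refine Finset.sum_eq_zero fun j hj => ?_
      have hia : i ≤ a := Nat.lt_succ_iff.mp (Finset.mem_range.mp hi)
      have hjb : j ≤ b := Nat.lt_succ_iff.mp (Finset.mem_range.mp hj)
      have hw : ((i + 1 + 1 : ℕ) : ℝ) + m * (j : ℕ) +
          (((a - i : ℕ) : ℝ) + m * ((b - j + 1 + 1 : ℕ) : ℝ)) ≠ 2 * e := by
        push_cast [Nat.cast_sub hia, Nat.cast_sub hjb]
        intro hc; exact h (by linarith)
      have h1 := sub2 (i + 1 + 1) j (a - i) (b - j + 1 + 1) hw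
      linear_combination (((i + 1 : ℕ) : ℝ) * ((i + 1 + 1 : ℕ) : ℝ) *
        ((b - j + 1 : ℕ) : ℝ) * ((b - j + 1 + 1 : ℕ) : ℝ)) * h1
end
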